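/- arXiv:0905.3701 — 5 statements merged into one kernel-verified Lean document; each statement's English description precedes it below -/
import Mathlib

section
/- Let μ, σ : J → ℝ satisfy the Engelbert–Schmidt conditions. Then v(l) < ∞ if and only if both s(l) > −∞ and the function x ↦ (s(x) − s(l))/(ρ(x)σ²(x)) belongs to L¹_loc(l+). (Equivalence of the two forms of Feller's test for explosion at the left endpoint l.) -/
open MeasureTheory Set Filter

/-!
Put `w = ρ σ²`; for `x ≤ c`, `v x = ∫ y in x..c, (s y - s x) / w y`. If `m ≤ s` on `J` and
`(s - m) / w` is integrable near `l`, then `v x ≤ ∫ y in x..c, (s y - m) / w y` is bounded.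
Conversely, let `v ≤ M` on `(l, c]` and `G p = ∫ y in p..c, 1 / w y`. For `x ≤ p < c`, monotonicity
of `s` gives `(s p - s x) * G p ≤ v x ≤ M`; so `s` is bounded below, its infimum `m` satisfies
`(s p - m) * G p ≤ M`, and `∫ y in p..c, (s y - m) / w y = v p + (s p - m) * G p ≤ 2 * M`
for every `p < c`. Monotone convergence along a sequence `p ↓ l` then gives integrability.
-/

section ExtendedRealInterval

variable {l r : EReal}

theorem ordConnected_preimage_coe_Ioo : ((↑) ⁻¹' Ioo l r : Set ℝ).OrdConnected :=
  ordConnected_Ioo.preimage_mono fun _ _ => EReal.coe_le_coe_iff.2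

theorem isOpen_preimage_coe_Ioo : IsOpen ((↑) ⁻¹' Ioo l r : Set ℝ) :=
  isOpen_Ioo.preimage continuous_coe_real_ereal

theorem exists_seq_mem_Ioo_eventually_lt {z : ℝ} (hz : (z : EReal) ∈ Ioo l r) :
    ∃ a : ℕ → ℝ, (∀ n, (a n : EReal) ∈ Ioo l r ∧ a n < z) ∧
      ∀ y : ℝ, l < y → ∀ᶠ n in atTop, a n < y := by
  obtain ⟨u, -, hu_mem, hu_lim⟩ := exists_seq_strictAnti_tendsto' hz.1
  have hu_coe : ∀ n, ((u n).toReal : EReal) = u n := fun n =>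
    EReal.coe_toReal (hu_mem n).2.ne_top (hu_mem n).1.ne_bot
  refine ⟨fun n => (u n).toReal, fun n => ?_, fun y hy => ?_⟩
  · rw [hu_coe, ← EReal.coe_lt_coe_iff, hu_coe]
    exact ⟨⟨(hu_mem n).1, (hu_mem n).2.trans hz.2⟩, (hu_mem n).2⟩
  · exact (hu_lim.eventually_lt_const hy).mono fun n hn =>
      EReal.coe_lt_coe_iff.1 (by rwa [hu_coe])

end ExtendedRealInterval

theorem integrableOn_of_setIntegral_Ioc_le {f : ℝ → ℝ} {S : Set ℝ} {a : ℕ → ℝ} {b I : ℝ}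
    (hS : MeasurableSet S) (hSb : S ⊆ Iic b) (haS : ∀ n, Ioc (a n) b ⊆ S)
    (hcover : ∀ y ∈ S, ∀ᶠ n in atTop, a n < y) (hf_nonneg : ∀ y ∈ S, 0 ≤ f y)
    (hf : ∀ n, IntegrableOn f (Ioc (a n) b)) (hI : ∀ n, ∫ y in Ioc (a n) b, f y ≤ I) :
    IntegrableOn f S := by
  have hcov : AECover (volume.restrict S) atTop fun n => Ioc (a n) b :=
    aecover_restrict_of_ae_imp hS
      (ae_of_all _ fun y hy => (hcover y hy).mono fun _ hn => ⟨hn, hSb hy⟩)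
      fun _ => measurableSet_Ioc
  refine hcov.integrable_of_integral_bounded_of_nonneg_ae I
    (fun n => (hf n).mono subset_rfl Measure.restrict_le_self)
    ((ae_restrict_iff' hS).2 (ae_of_all _ hf_nonneg)) (Eventually.of_forall fun n => ?_)
  rw [Measure.restrict_restrict measurableSet_Ioc, inter_eq_left.2 (haS n)]
  exact hI n

section Primitive

variable {J : Set ℝ} {f : ℝ → ℝ} {c : ℝ}

theorem continuousOn_primitive_of_isOpen (hJ : IsOpen J)
    (hf : ∀ a ∈ J, ∀ b ∈ J, IntervalIntegrable f volume a b) (hc : c ∈ J) :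
    ContinuousOn (fun x => ∫ y in c..x, f y) J := by
  intro x hx
  obtain ⟨a, b, -, hab_nhds, habJ⟩ := exists_Icc_mem_subset_of_mem_nhds (hJ.mem_nhds hx)
  have ha : a ∈ J := habJ (left_mem_Icc.2 (nonempty_Icc.1 (nonempty_of_mem hab_nhds)))
  have hb : b ∈ J := habJ (right_mem_Icc.2 (nonempty_Icc.1 (nonempty_of_mem hab_nhds)))
  have h_int := hf _ (min_rec' (· ∈ J) hc ha) _ (max_rec' (· ∈ J) hc hb)
  exact ((intervalIntegral.continuousWithinAt_primitive Real.volume_singleton h_int).continuousAt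
    hab_nhds).continuousWithinAt

theorem intervalIntegrable_of_integrableOn_isCompact (hJ : J.OrdConnected)
    (hf : ∀ K ⊆ J, IsCompact K → IntegrableOn f K) {a b : ℝ} (ha : a ∈ J) (hb : b ∈ J) :
    IntervalIntegrable f volume a b :=
  (hf _ (hJ.uIcc_subset ha hb) isCompact_uIcc).intervalIntegrable

theorem monotoneOn_primitive_of_nonneg (hJ : J.OrdConnected)
    (hf : ∀ a ∈ J, ∀ b ∈ J, IntervalIntegrable f volume a b) (hf_nonneg : ∀ y ∈ J, 0 ≤ f y)
    (hc : c ∈ J) : MonotoneOn (fun x => ∫ y in c..x, f y) J := by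
  intro a ha b hb hab
  have h : 0 ≤ ∫ y in a..b, f y :=
    intervalIntegral.integral_nonneg hab fun y hy => hf_nonneg y (hJ.out ha hb hy)
  rw [← intervalIntegral.integral_interval_sub_left (hf c hc b hb) (hf c hc a ha)] at h
  exact sub_nonneg.1 h

end Primitive

section ScaleFunction

variable {J : Set ℝ} {s w : ℝ → ℝ} {c M : ℝ}

theorem intervalIntegrable_sub_div (hJ : J.OrdConnected) (hs_cont : ContinuousOn s J)
    (hw_int : ∀ a ∈ J, ∀ b ∈ J, IntervalIntegrable (fun y => 1 / w y) volume a b)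
    (t : ℝ) {a b : ℝ} (ha : a ∈ J) (hb : b ∈ J) :
    IntervalIntegrable (fun y => (s y - t) / w y) volume a b := by
  have h_cont : ContinuousOn (fun y => s y - t) (uIcc a b) :=
    (hs_cont.mono (hJ.uIcc_subset ha hb)).sub continuousOn_const
  simpa only [mul_one_div] using (hw_int a ha b hb).continuousOn_mul h_cont

theorem sub_mul_integral_one_div_le_integral (hJ : J.OrdConnected) (hs_mono : MonotoneOn s J)
    (hs_cont : ContinuousOn s J) (hw_pos : ∀ y ∈ J, 0 < w y)
    (hw_int : ∀ a ∈ J, ∀ b ∈ J, IntervalIntegrable (fun y => 1 / w y) volume a b)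
    {x p : ℝ} (hx : x ∈ J) (hp : p ∈ J) (hc : c ∈ J) (hxp : x ≤ p) (hpc : p ≤ c) :
    (s p - s x) * ∫ y in p..c, 1 / w y ≤ ∫ y in x..c, (s y - s x) / w y := by
  have hI {a b : ℝ} (ha : a ∈ J) (hb : b ∈ J) :=
    intervalIntegrable_sub_div hJ hs_cont hw_int (s x) ha hb
  rw [← intervalIntegral.integral_add_adjacent_intervals (hI hx hp) (hI hp hc),
    ← intervalIntegral.integral_const_mul]
  have h_left : 0 ≤ ∫ y in x..p, (s y - s x) / w y :=
    intervalIntegral.integral_nonneg hxp fun y hy =>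
      div_nonneg (sub_nonneg.2 (hs_mono hx (hJ.out hx hp hy) hy.1))
        (hw_pos y (hJ.out hx hp hy)).le
  have h_right : ∫ y in p..c, (s p - s x) * (1 / w y) ≤ ∫ y in p..c, (s y - s x) / w y :=
    intervalIntegral.integral_mono_on hpc ((hw_int p hp c hc).const_mul _) (hI hp hc)
      fun y hy => by
        have hy' := hJ.out hp hc hy
        rw [mul_one_div]
        exact div_le_div_of_nonneg_right (by linarith [hs_mono hp hy' hy.1]) (hw_pos y hy').le
  linarith

theorem integral_one_div_pos (hJ : J.OrdConnected) (hw_pos : ∀ y ∈ J, 0 < w y)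
    (hw_int : ∀ a ∈ J, ∀ b ∈ J, IntervalIntegrable (fun y => 1 / w y) volume a b)
    {p : ℝ} (hp : p ∈ J) (hc : c ∈ J) (hpc : p < c) : 0 < ∫ y in p..c, 1 / w y :=
  intervalIntegral.intervalIntegral_pos_of_pos_on (hw_int p hp c hc)
    (fun y hy => one_div_pos.2 (hw_pos y (hJ.out hp hc (Ioo_subset_Icc_self hy)))) hpc

theorem sub_div_integral_one_div_le (hJ : J.OrdConnected) (hs_mono : MonotoneOn s J)
    (hs_cont : ContinuousOn s J) (hw_pos : ∀ y ∈ J, 0 < w y)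
    (hw_int : ∀ a ∈ J, ∀ b ∈ J, IntervalIntegrable (fun y => 1 / w y) volume a b)
    (hV : ∀ x ∈ J, x ≤ c → ∫ y in x..c, (s y - s x) / w y ≤ M)
    {p x : ℝ} (hp : p ∈ J) (hc : c ∈ J) (hpc : p < c) (hx : x ∈ J) :
    s p - M / ∫ y in p..c, 1 / w y ≤ s x := by
  have hG := integral_one_div_pos hJ hw_pos hw_int hp hc hpc
  rw [sub_le_comm, le_div_iff₀ hG]
  rcases le_total x p with hxp | hpx
  · exact (sub_mul_integral_one_div_le_integral hJ hs_mono hs_cont hw_pos hw_int hx hp hc hxp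
      hpc.le).trans (hV x hx (hxp.trans hpc.le))
  · have hM : 0 ≤ M := by simpa using hV c hc le_rfl
    exact (mul_nonpos_of_nonpos_of_nonneg (sub_nonpos.2 (hs_mono hp hx hpx)) hG.le).trans hM

theorem bddBelow_image_of_integral_le (hJ : J.OrdConnected) (hs_mono : MonotoneOn s J)
    (hs_cont : ContinuousOn s J) (hw_pos : ∀ y ∈ J, 0 < w y)
    (hw_int : ∀ a ∈ J, ∀ b ∈ J, IntervalIntegrable (fun y => 1 / w y) volume a b)
    (hV : ∀ x ∈ J, x ≤ c → ∫ y in x..c, (s y - s x) / w y ≤ M)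
    {p : ℝ} (hp : p ∈ J) (hc : c ∈ J) (hpc : p < c) : BddBelow (s '' J) :=
  ⟨_, forall_mem_image.2 fun _ hx =>
    sub_div_integral_one_div_le hJ hs_mono hs_cont hw_pos hw_int hV hp hc hpc hx⟩

theorem integral_sub_sInf_div_le (hJ : J.OrdConnected) (hs_mono : MonotoneOn s J)
    (hs_cont : ContinuousOn s J) (hw_pos : ∀ y ∈ J, 0 < w y)
    (hw_int : ∀ a ∈ J, ∀ b ∈ J, IntervalIntegrable (fun y => 1 / w y) volume a b)
    (hV : ∀ x ∈ J, x ≤ c → ∫ y in x..c, (s y - s x) / w y ≤ M)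
    {p : ℝ} (hp : p ∈ J) (hc : c ∈ J) (hpc : p < c) :
    ∫ y in p..c, (s y - sInf (s '' J)) / w y ≤ 2 * M := by
  have hG := integral_one_div_pos hJ hw_pos hw_int hp hc hpc
  have hm : s p - M / ∫ y in p..c, 1 / w y ≤ sInf (s '' J) :=
    le_csInf ⟨_, mem_image_of_mem s hc⟩ <| forall_mem_image.2
      fun _ hx => sub_div_integral_one_div_le hJ hs_mono hs_cont hw_pos hw_int hV hp hc hpc hx
  have hmG : (s p - sInf (s '' J)) * ∫ y in p..c, 1 / w y ≤ M := (le_div_iff₀ hG).1 (by linarith)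
  have hsplit := intervalIntegral.integral_add
    (intervalIntegrable_sub_div hJ hs_cont hw_int (s p) hp hc)
    ((hw_int p hp c hc).const_mul (s p - sInf (s '' J)))
  rw [intervalIntegral.integral_const_mul] at hsplit
  calc ∫ y in p..c, (s y - sInf (s '' J)) / w y
      = ∫ y in p..c, (s y - s p) / w y + (s p - sInf (s '' J)) * (1 / w y) :=
        intervalIntegral.integral_congr fun y _ => by
          rw [mul_one_div, ← add_div, sub_add_sub_cancel]
    _ ≤ M + M := hsplit ▸ add_le_add (hV p hp hpc.le) hmG
    _ = 2 * M := by ring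

theorem bddAbove_integral_sub_div_of_integrableOn (hJ : J.OrdConnected)
    (hs_cont : ContinuousOn s J) (hw_pos : ∀ y ∈ J, 0 < w y)
    (hw_int : ∀ a ∈ J, ∀ b ∈ J, IntervalIntegrable (fun y => 1 / w y) volume a b)
    {m z : ℝ} (hm : ∀ x ∈ J, m ≤ s x) (hz : z ∈ J) (hc : c ∈ J)
    (hint : IntegrableOn (fun x => (s x - m) / w x) (J ∩ Iio z)) :
    BddAbove ((fun x => ∫ y in x..c, (s y - s x) / w y) '' (J ∩ Iic c)) := by
  set T := J ∩ Iio z ∪ Icc (min z c) c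
  have hmin : min z c ∈ J := min_rec' (· ∈ J) hz hc
  have hTJ : T ⊆ J := union_subset inter_subset_left (hJ.out hmin hc)
  have hT : MeasurableSet T := (hJ.measurableSet.inter measurableSet_Iio).union measurableSet_Icc
  have hintT : IntegrableOn (fun x => (s x - m) / w x) T :=
    hint.union <| (intervalIntegrable_iff_integrableOn_Icc_of_le (min_le_right z c)).1
      (intervalIntegrable_sub_div hJ hs_cont hw_int m hmin hc)
  have hnonneg : 0 ≤ᵐ[volume.restrict T] fun x => (s x - m) / w x :=
    ae_restrict_of_forall_mem hT fun y hy =>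
      div_nonneg (sub_nonneg.2 (hm y (hTJ hy))) (hw_pos y (hTJ hy)).le
  refine ⟨∫ y in T, (s y - m) / w y, forall_mem_image.2 fun x ⟨hx, hxc⟩ => ?_⟩
  have hIocT : Ioc x c ⊆ T := fun y hy => by
    rcases lt_or_ge y z with hyz | hzy
    · exact Or.inl ⟨hJ.out hx hc (Ioc_subset_Icc_self hy), hyz⟩
    · exact Or.inr ⟨(min_le_left z c).trans hzy, hy.2⟩
  calc ∫ y in x..c, (s y - s x) / w y ≤ ∫ y in x..c, (s y - m) / w y :=
        intervalIntegral.integral_mono_on hxc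
          (intervalIntegrable_sub_div hJ hs_cont hw_int _ hx hc)
          (intervalIntegrable_sub_div hJ hs_cont hw_int _ hx hc) fun y hy =>
          div_le_div_of_nonneg_right (by linarith [hm x hx]) (hw_pos y (hJ.out hx hc hy)).le
    _ = ∫ y in Ioc x c, (s y - m) / w y := intervalIntegral.integral_of_le hxc
    _ ≤ ∫ y in T, (s y - m) / w y := setIntegral_mono_set hintT hnonneg hIocT.eventuallyLE

end ScaleFunction

theorem bddBelow_image_and_integrableOn_of_integral_le {l r : EReal} {J : Set ℝ}
    (hJ : J = (↑) ⁻¹' Ioo l r) {s w : ℝ → ℝ} {c M : ℝ} (hc : c ∈ J) (hs_mono : MonotoneOn s J)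
    (hs_cont : ContinuousOn s J) (hw_pos : ∀ y ∈ J, 0 < w y)
    (hw_int : ∀ a ∈ J, ∀ b ∈ J, IntervalIntegrable (fun y => 1 / w y) volume a b)
    (hV : ∀ x ∈ J, x ≤ c → ∫ y in x..c, (s y - s x) / w y ≤ M) :
    BddBelow (s '' J) ∧ IntegrableOn (fun x => (s x - sInf (s '' J)) / w x) (J ∩ Iio c) := by
  subst hJ
  have hJ : ((↑) ⁻¹' Ioo l r : Set ℝ).OrdConnected := ordConnected_preimage_coe_Ioo
  obtain ⟨a, ha, ha_lim⟩ := exists_seq_mem_Ioo_eventually_lt hc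
  have hbdd :=
    bddBelow_image_of_integral_le hJ hs_mono hs_cont hw_pos hw_int hV (ha 0).1 hc (ha 0).2
  refine ⟨hbdd, IntegrableOn.mono_set ?_ (inter_subset_inter_right _ Iio_subset_Iic_self)⟩
  refine integrableOn_of_setIntegral_Ioc_le (I := 2 * M)
    (hJ.measurableSet.inter measurableSet_Iic) inter_subset_right
    (fun n y hy => ⟨hJ.out (ha n).1 hc (Ioc_subset_Icc_self hy), hy.2⟩)
    (fun y hy => ha_lim y hy.1.1)
    (fun y hy => div_nonneg (sub_nonneg.2 (csInf_le hbdd (mem_image_of_mem s hy.1)))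
      (hw_pos y hy.1).le)
    (fun n => (intervalIntegrable_sub_div hJ hs_cont hw_int _ (ha n).1 hc).1) fun n => ?_
  rw [← intervalIntegral.integral_of_le (ha n).2.le]
  exact integral_sub_sInf_div_le hJ hs_mono hs_cont hw_pos hw_int hV (ha n).1 hc (ha n).2

theorem bddAbove_integral_sub_div_iff {l r : EReal} {J : Set ℝ}
    (hJ : J = (↑) ⁻¹' Ioo l r) {s w : ℝ → ℝ} {c : ℝ} (hc : c ∈ J) (hs_mono : MonotoneOn s J)
    (hs_cont : ContinuousOn s J) (hw_pos : ∀ y ∈ J, 0 < w y)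
    (hw_int : ∀ a ∈ J, ∀ b ∈ J, IntervalIntegrable (fun y => 1 / w y) volume a b) :
    BddAbove ((fun x => ∫ y in x..c, (s y - s x) / w y) '' (J ∩ Iic c)) ↔
      BddBelow (s '' J) ∧
        ∃ z ∈ J, IntegrableOn (fun x => (s x - sInf (s '' J)) / w x) (J ∩ Iio z) := by
  constructor
  · rintro ⟨M, hM⟩
    obtain ⟨hbdd, hint⟩ := bddBelow_image_and_integrableOn_of_integral_le hJ hc hs_mono hs_cont
      hw_pos hw_int fun x hx hxc => hM (mem_image_of_mem _ ⟨hx, hxc⟩)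
    exact ⟨hbdd, c, hc, hint⟩
  · rintro ⟨hbdd, z, hz, hint⟩
    exact bddAbove_integral_sub_div_of_integrableOn (hJ ▸ ordConnected_preimage_coe_Ioo) hs_cont
      hw_pos hw_int (fun x hx => csInf_le hbdd (mem_image_of_mem s hx)) hz hc hint

theorem feller_test_left_endpoint_general
    (l r : EReal)
    (J : Set ℝ) (hJdef : J = {x : ℝ | l < (x : EReal) ∧ (x : EReal) < r})
    (μ σ : ℝ → ℝ)
    (hσ0 : ∀ x ∈ J, σ x ≠ 0)
    (hloc1 : ∀ K : Set ℝ, K ⊆ J → IsCompact K →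
      IntegrableOn (fun x => 1 / σ x ^ 2) K volume)
    (hloc2 : ∀ K : Set ℝ, K ⊆ J → IsCompact K →
      IntegrableOn (fun x => μ x / σ x ^ 2) K volume)
    (c : ℝ) (hc : c ∈ J)
    (ρ s v : ℝ → ℝ)
    (hρ : ∀ x ∈ J, ρ x = Real.exp (-(∫ y in c..x, 2 * μ y / σ y ^ 2)))
    (hs : ∀ x ∈ J, s x = ∫ y in c..x, ρ y)
    (hv : ∀ x ∈ J, v x = ∫ y in c..x, (s x - s y) / (ρ y * σ y ^ 2)) :
    BddAbove (v '' (J ∩ Iic c)) ↔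
      (BddBelow (s '' J) ∧
        ∃ z ∈ J, IntegrableOn
          (fun x => (s x - sInf (s '' J)) / (ρ x * σ x ^ 2)) (J ∩ Iio z) volume) := by
  have hJ : J.OrdConnected := hJdef ▸ ordConnected_preimage_coe_Ioo
  have hJ_open : IsOpen J := hJdef ▸ isOpen_preimage_coe_Ioo
  have hρ_cont : ContinuousOn ρ J := by
    refine (Real.continuous_exp.comp_continuousOn
      (continuousOn_primitive_of_isOpen hJ_open (fun a ha b hb => ?_) hc).neg).congr hρ
    simpa only [mul_div_assoc] using
      (intervalIntegrable_of_integrableOn_isCompact hJ hloc2 ha hb).const_mul 2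
  have hρ_pos : ∀ x ∈ J, 0 < ρ x := fun x hx => hρ x hx ▸ Real.exp_pos _
  have hρ_int : ∀ a ∈ J, ∀ b ∈ J, IntervalIntegrable ρ volume a b := fun a ha b hb =>
    (hρ_cont.mono (hJ.uIcc_subset ha hb)).intervalIntegrable
  have hw_int : ∀ a ∈ J, ∀ b ∈ J, IntervalIntegrable (fun y => 1 / (ρ y * σ y ^ 2)) volume a b :=
    fun a ha b hb => by
      have hsub := hJ.uIcc_subset ha hb
      have h_inv : ContinuousOn (fun y => 1 / ρ y) (uIcc a b) :=
        continuousOn_const.div (hρ_cont.mono hsub) fun y hy => (hρ_pos y (hsub hy)).ne'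
      simpa only [one_div_mul_one_div] using
        (intervalIntegrable_of_integrableOn_isCompact hJ hloc1 ha hb).continuousOn_mul h_inv
  have hv_eq : EqOn v (fun x => ∫ y in x..c, (s y - s x) / (ρ y * σ y ^ 2)) (J ∩ Iic c) :=
    fun x hx => by
      rw [hv x hx.1, intervalIntegral.integral_symm, ← intervalIntegral.integral_neg]
      simp only [← neg_div, neg_sub]
  rw [hv_eq.image_eq]
  exact bddAbove_integral_sub_div_iff hJdef hc
    ((monotoneOn_primitive_of_nonneg hJ hρ_int (fun y hy => (hρ_pos y hy).le) hc).congr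
      fun x hx => (hs x hx).symm)
    ((continuousOn_primitive_of_isOpen hJ_open hρ_int hc).congr hs)
    (fun y hy => mul_pos (hρ_pos y hy) (pow_two_pos_of_ne_zero (hσ0 y hy))) hw_int

/-- **Feller's test for explosion at the left endpoint `l`: equivalence of the two forms.**
Let `J = (l, r)` (with `-∞ ≤ l < r ≤ ∞`, modelled by `l r : EReal`), fix `c ∈ J`, and let
`μ, σ : J → ℝ` be Borel functions satisfying the Engelbert–Schmidt conditions.  With
`ρ(x) = exp(-∫_c^x 2μ/σ²)`, `s(x) = ∫_c^x ρ` and `v(x) = ∫_c^x (s(x) - s(y))/(ρ(y) σ(y)²) dy`,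
the monotone limit `v(l) = lim_{x ↓ l} v(x)` is finite (i.e. `v` is bounded above on
`J ∩ (-∞, c]`, since `v` is decreasing on `(l, c)`) if and only if
`s(l) = lim_{x ↓ l} s(x)` is `> -∞` (i.e. `s` is bounded below on `J`, and then
`s(l) = sInf (s '' J)`) and the function `x ↦ (s(x) - s(l))/(ρ(x) σ(x)²)` belongs to
`L¹_loc(l+)`, i.e. is integrable on `J ∩ (-∞, z)` (that is, on `(l, z)`) for some `z ∈ J`. -/
theorem feller_test_left_endpoint
    (l r : EReal) (hlr : l < r)
    (J : Set ℝ) (hJdef : J = {x : ℝ | l < (x : EReal) ∧ (x : EReal) < r})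
    (μ σ : ℝ → ℝ) (hμm : Measurable μ) (hσm : Measurable σ)
    (hσ0 : ∀ x ∈ J, σ x ≠ 0)
    (hloc1 : ∀ K : Set ℝ, K ⊆ J → IsCompact K →
      IntegrableOn (fun x => 1 / σ x ^ 2) K volume)
    (hloc2 : ∀ K : Set ℝ, K ⊆ J → IsCompact K →
      IntegrableOn (fun x => μ x / σ x ^ 2) K volume)
    (c : ℝ) (hc : c ∈ J)
    (ρ s v : ℝ → ℝ)
    (hρ : ∀ x ∈ J, ρ x = Real.exp (-(∫ y in c..x, 2 * μ y / σ y ^ 2)))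
    (hs : ∀ x ∈ J, s x = ∫ y in c..x, ρ y)
    (hv : ∀ x ∈ J, v x = ∫ y in c..x, (s x - s y) / (ρ y * σ y ^ 2)) :
    BddAbove (v '' (J ∩ Iic c)) ↔
      (BddBelow (s '' J) ∧
        ∃ z ∈ J, IntegrableOn
          (fun x => (s x - sInf (s '' J)) / (ρ x * σ x ^ 2)) (J ∩ Iio z) volume) :=
  feller_test_left_endpoint_general l r J hJdef μ σ hσ0 hloc1 hloc2 c hc ρ s v hρ hs hv
end

section
/- Let S be a separating time for (Ω, F, (F_t), P, P̃). Then: (i) P̃ and P are locally equivalent (i.e. P̃_t ∼ P_t on F_t for every t ∈ [0,∞)) if and only if S ≥ ∞ holds both P-a.s. and P̃-a.s.; (ii) P̃ is locally absolutely continuous with respect to P (i.e. P̃_t ≪ P_t on F_t for every t ∈ [0,∞)) if and only if S ≥ ∞ holds P̃-a.s. -/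
open MeasureTheory
open scoped ENNReal NNReal

/-- `A` belongs to the σ-field `F_τ = {A ∈ F : A ∩ {τ ≤ t} ∈ F_t for all t}` associated with the
stopping time `τ`.  Here the filtration is indexed by `t ∈ [0,∞] = ℝ≥0∞`, with `𝓕 ∞ = F` (the
full σ-field `m`), so this coincides with the definition in the paper, where the condition is
required for `t ∈ [0,∞)` and membership in `F` is required separately. -/
def MemSigmaAt {Ω : Type*} {m : MeasurableSpace Ω} (𝓕 : Filtration ℝ≥0∞ m)
    (τ : Ω → ℝ≥0∞) (A : Set Ω) : Prop :=
  ∀ t : ℝ≥0∞, MeasurableSet[𝓕 t] (A ∩ {ω | τ ω ≤ t})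

/-- `S : Ω → [0,∞] ∪ {δ}` (modelled as `WithTop ℝ≥0∞`, where the extra top point `⊤` plays the
role of `δ`, lying above `∞ = ((⊤ : ℝ≥0∞) : WithTop ℝ≥0∞)`) is an extended stopping time:
`{S ≤ t} ∈ F_t` for every `t ∈ [0,∞]`. -/
def IsExtendedStoppingTime {Ω : Type*} {m : MeasurableSpace Ω} (𝓕 : Filtration ℝ≥0∞ m)
    (S : Ω → WithTop ℝ≥0∞) : Prop :=
  ∀ t : ℝ≥0∞, MeasurableSet[𝓕 t] {ω | S ω ≤ (t : WithTop ℝ≥0∞)}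

/-- `S` is a separating time for `(Ω, F, (F_t), P, P̃)`: `S` is an extended stopping time such
that for every `(F_t)`-stopping time `τ` (with values in `[0,∞]`), the restrictions `P̃_τ` and
`P_τ` of `P̃` and `P` to `F_τ` are equivalent on `{τ < S}` (they have the same null sets there)
and mutually singular on `{τ ≥ S}`. -/
def IsSeparatingTime {Ω : Type*} {m : MeasurableSpace Ω} (𝓕 : Filtration ℝ≥0∞ m)
    (P Pt : Measure Ω) (S : Ω → WithTop ℝ≥0∞) : Prop :=
  IsExtendedStoppingTime 𝓕 S ∧
  ∀ τ : Ω → ℝ≥0∞, IsStoppingTime 𝓕 (fun ω => (τ ω : WithTop ℝ≥0∞)) →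
    (∀ A : Set Ω, MemSigmaAt 𝓕 τ A →
      (Pt (A ∩ {ω | (τ ω : WithTop ℝ≥0∞) < S ω}) = 0 ↔
        P (A ∩ {ω | (τ ω : WithTop ℝ≥0∞) < S ω}) = 0)) ∧
    (∃ D : Set Ω, MemSigmaAt 𝓕 τ D ∧
      P (D ∩ {ω | S ω ≤ (τ ω : WithTop ℝ≥0∞)}) = 0 ∧
      Pt (Dᶜ ∩ {ω | S ω ≤ (τ ω : WithTop ℝ≥0∞)}) = 0)

/-!
Both parts come from testing the separating time against the deterministic stopping times `τ = t`.
On `{t < S}` the laws `P̃_t` and `P_t` share their null sets, so when `S ≥ ∞` holds `P̃`-a.s. every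
`P_t`-null set of `F_t` is `P̃`-null. Conversely, the `F_t`-measurable set `D` on which `P_t` and
`P̃_t` are singular inside `{S ≤ t}` is `P`-null there, hence `P̃`-null if `P̃_t ≪ P_t`, so
`P̃ {S ≤ t} = 0`; letting `t` run through `ℕ` gives `P̃ {S < ∞} = 0`. Part (i) is part (ii)
applied to `(P, P̃)` and to `(P̃, P)`, the definition of a separating time being symmetric.
-/

/-- `P̃ ≪loc P`: `P̃_t ≪ P_t` on `F_t` for every finite `t`. -/
def LocallyAbsolutelyContinuous {Ω : Type*} {m : MeasurableSpace Ω} (𝓕 : Filtration ℝ≥0∞ m)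
    (Pt P : Measure Ω) : Prop :=
  ∀ t : ℝ≥0∞, t ≠ ⊤ → ∀ A : Set Ω, MeasurableSet[𝓕 t] A → P A = 0 → Pt A = 0

section SeparatingTime

variable {Ω : Type*} {m : MeasurableSpace Ω} {𝓕 : Filtration ℝ≥0∞ m}

lemma memSigmaAt_const {t : ℝ≥0∞} {A : Set Ω} (hA : MeasurableSet[𝓕 t] A) :
    MemSigmaAt 𝓕 (fun _ => t) A := by
  intro s
  by_cases hts : t ≤ s
  · simpa [hts] using 𝓕.mono hts _ hA
  · simp [hts]

lemma setOf_lt_top_subset_iUnion_le_natCast (S : Ω → WithTop ℝ≥0∞) :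
    {ω | S ω < ((⊤ : ℝ≥0∞) : WithTop ℝ≥0∞)} ⊆
      ⋃ n : ℕ, {ω | S ω ≤ ((n : ℝ≥0∞) : WithTop ℝ≥0∞)} := by
  intro ω hω
  simp only [Set.mem_ofPred_eq, Set.mem_iUnion] at hω ⊢
  lift S ω to ℝ≥0∞ using ne_top_of_lt hω with r
  obtain ⟨n, hn⟩ := ENNReal.exists_nat_gt (WithTop.coe_lt_coe.mp hω).ne
  exact ⟨n, WithTop.coe_le_coe.mpr hn.le⟩

namespace IsSeparatingTime

variable {P Pt : Measure Ω} {S : Ω → WithTop ℝ≥0∞}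

lemma symm (hS : IsSeparatingTime 𝓕 P Pt S) : IsSeparatingTime 𝓕 Pt P S := by
  refine ⟨hS.1, fun τ hτ => ?_⟩
  obtain ⟨hequiv, D, hD, hPD, hPtD⟩ := hS.2 τ hτ
  refine ⟨fun A hA => (hequiv A hA).symm, Dᶜ, fun s => ?_, hPtD, by rwa [compl_compl]⟩
  rw [← Set.sdiff_eq_compl_inter, ← Set.sdiff_inter_self_eq_sdiff]
  exact MeasurableSet.diff (by simpa using hτ.measurableSet_le s) (hD s)

lemma measure_setOf_le_eq_zero (hS : IsSeparatingTime 𝓕 P Pt S) {t : ℝ≥0∞} (ht : t ≠ ⊤)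
    (hac : LocallyAbsolutelyContinuous 𝓕 Pt P) :
    Pt {ω | S ω ≤ (t : WithTop ℝ≥0∞)} = 0 := by
  obtain ⟨-, D, hD, hPD, hPtD⟩ := hS.2 (fun _ => t) (isStoppingTime_const 𝓕 t)
  have hDt : MeasurableSet[𝓕 t] D := by simpa using hD t
  have hPtD' : Pt (D ∩ {ω | S ω ≤ (t : WithTop ℝ≥0∞)}) = 0 :=
    hac t ht _ (hDt.inter (hS.1 t)) hPD
  rw [← Set.inter_union_compl {ω | S ω ≤ (t : WithTop ℝ≥0∞)} D, Set.inter_comm,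
    Set.inter_comm _ Dᶜ]
  exact measure_union_null hPtD' hPtD

lemma measure_setOf_lt_top_eq_zero (hS : IsSeparatingTime 𝓕 P Pt S)
    (hac : LocallyAbsolutelyContinuous 𝓕 Pt P) :
    Pt {ω | S ω < ((⊤ : ℝ≥0∞) : WithTop ℝ≥0∞)} = 0 :=
  measure_mono_null (setOf_lt_top_subset_iUnion_le_natCast S) <| measure_iUnion_null fun n =>
    hS.measure_setOf_le_eq_zero (ENNReal.natCast_ne_top n) hac

lemma locallyAbsolutelyContinuous (hS : IsSeparatingTime 𝓕 P Pt S)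
    (hnull : Pt {ω | S ω < ((⊤ : ℝ≥0∞) : WithTop ℝ≥0∞)} = 0) :
    LocallyAbsolutelyContinuous 𝓕 Pt P := by
  intro t ht A hA hPA
  have hequiv := (hS.2 (fun _ => t) (isStoppingTime_const 𝓕 t)).1 A (memSigmaAt_const hA)
  have hbefore : Pt (A ∩ {ω | (t : WithTop ℝ≥0∞) < S ω}) = 0 :=
    hequiv.mpr (measure_mono_null Set.inter_subset_left hPA)
  refine measure_mono_null (fun ω hωA => ?_) (measure_union_null hbefore hnull)
  by_cases hω : (t : WithTop ℝ≥0∞) < S ω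
  · exact Or.inl ⟨hωA, hω⟩
  · exact Or.inr ((not_lt.mp hω).trans_lt (WithTop.coe_lt_coe.mpr ht.lt_top))

lemma locallyAbsolutelyContinuous_iff (hS : IsSeparatingTime 𝓕 P Pt S) :
    LocallyAbsolutelyContinuous 𝓕 Pt P ↔ Pt {ω | S ω < ((⊤ : ℝ≥0∞) : WithTop ℝ≥0∞)} = 0 :=
  ⟨hS.measure_setOf_lt_top_eq_zero, hS.locallyAbsolutelyContinuous⟩

end IsSeparatingTime

end SeparatingTime

theorem separating_time_loc_equiv_and_loc_ac_general {Ω : Type*} {m : MeasurableSpace Ω}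
    (𝓕 : Filtration ℝ≥0∞ m)
    (P Pt : Measure Ω)
    (S : Ω → WithTop ℝ≥0∞) (hS : IsSeparatingTime 𝓕 P Pt S) :
    ((∀ t : ℝ≥0∞, t ≠ ⊤ → ∀ A : Set Ω, MeasurableSet[𝓕 t] A → (Pt A = 0 ↔ P A = 0)) ↔
      (P {ω | S ω < ((⊤ : ℝ≥0∞) : WithTop ℝ≥0∞)} = 0 ∧
        Pt {ω | S ω < ((⊤ : ℝ≥0∞) : WithTop ℝ≥0∞)} = 0)) ∧
    ((∀ t : ℝ≥0∞, t ≠ ⊤ → ∀ A : Set Ω, MeasurableSet[𝓕 t] A → P A = 0 → Pt A = 0) ↔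
      Pt {ω | S ω < ((⊤ : ℝ≥0∞) : WithTop ℝ≥0∞)} = 0) := by
  have hequiv_iff : (∀ t : ℝ≥0∞, t ≠ ⊤ → ∀ A : Set Ω, MeasurableSet[𝓕 t] A →
      (Pt A = 0 ↔ P A = 0)) ↔
      LocallyAbsolutelyContinuous 𝓕 P Pt ∧ LocallyAbsolutelyContinuous 𝓕 Pt P :=
    ⟨fun h => ⟨fun t ht A hA => (h t ht A hA).mp, fun t ht A hA => (h t ht A hA).mpr⟩,
      fun h t ht A hA => ⟨h.1 t ht A hA, h.2 t ht A hA⟩⟩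
  refine ⟨?_, hS.locallyAbsolutelyContinuous_iff⟩
  rw [hequiv_iff, hS.symm.locallyAbsolutelyContinuous_iff, hS.locallyAbsolutelyContinuous_iff]

/-- **Separating time and local (mutual) absolute continuity**
(Lemma on separating times, (iii)–(iv)).
Let `S` be a separating time for `(Ω, F, (F_t), P, P̃)` (right-continuous filtration,
`F_∞ := F`, `P`, `P̃` probability measures).  Then:
(i) `P̃ ∼loc P`, i.e. `P̃_t ∼ P_t` on `F_t` for every `t ∈ [0,∞)`, iff `S ≥ ∞` holds `P`-a.s.
and `P̃`-a.s.;
(ii) `P̃ ≪loc P`, i.e. `P̃_t ≪ P_t` on `F_t` for every `t ∈ [0,∞)`, iff `S ≥ ∞` holds `P̃`-a.s.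
Here `∞ = ((⊤ : ℝ≥0∞) : WithTop ℝ≥0∞)` and `S ≥ ∞` a.s. means `{S < ∞}` is a null set. -/
theorem separating_time_loc_equiv_and_loc_ac {Ω : Type*} {m : MeasurableSpace Ω}
    (𝓕 : Filtration ℝ≥0∞ m) (htop : 𝓕 ⊤ = m)
    (hrc : ∀ t : ℝ≥0∞, t ≠ ⊤ → 𝓕 t = ⨅ s : {s : ℝ≥0∞ // t < s ∧ s ≠ ⊤}, 𝓕 s.1)
    (P Pt : Measure Ω) [IsProbabilityMeasure P] [IsProbabilityMeasure Pt]
    (S : Ω → WithTop ℝ≥0∞) (hS : IsSeparatingTime 𝓕 P Pt S) :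
    ((∀ t : ℝ≥0∞, t ≠ ⊤ → ∀ A : Set Ω, MeasurableSet[𝓕 t] A → (Pt A = 0 ↔ P A = 0)) ↔
      (P {ω | S ω < ((⊤ : ℝ≥0∞) : WithTop ℝ≥0∞)} = 0 ∧
        Pt {ω | S ω < ((⊤ : ℝ≥0∞) : WithTop ℝ≥0∞)} = 0)) ∧
    ((∀ t : ℝ≥0∞, t ≠ ⊤ → ∀ A : Set Ω, MeasurableSet[𝓕 t] A → P A = 0 → Pt A = 0) ↔
      Pt {ω | S ω < ((⊤ : ℝ≥0∞) : WithTop ℝ≥0∞)} = 0) :=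
  separating_time_loc_equiv_and_loc_ac_general 𝓕 P Pt S hS
end

section
/- Let S be a separating time for (Ω, F, (F_t), P, P̃). Then for every t ∈ [0,∞]: (i) P̃_t ≪ P_t (on F_t, with F_∞ := F) if and only if S > t holds P̃-a.s.; (ii) P̃_t ⊥ P_t if and only if S ≤ t holds both P-a.s. and P̃-a.s., which in turn holds if and only if S ≤ t holds P-a.s. -/
open MeasureTheory
open scoped ENNReal NNReal

/-!
At a deterministic time `t` the separating time splits `Ω` into the `F_t`-measurable region
`{S ≤ t}`, where `P̃_t` and `P_t` are singular, and its complement `{t < S}`, where they have the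
same null sets. So `P̃_t ≪ P_t` fails exactly when `P̃` charges the singular region, and
`P̃_t ⊥ P_t` fails exactly when `P`, or equivalently `P̃`, charges the equivalence region.
-/

lemma measure_eq_zero_of_inter_of_inter_compl {Ω : Type*} {m : MeasurableSpace Ω}
    (μ : Measure Ω) {A B : Set Ω} (h : μ (A ∩ B) = 0) (hc : μ (A ∩ Bᶜ) = 0) : μ A = 0 := by
  rw [← Set.inter_union_compl A B]
  exact measure_union_null h hc

lemma measure_eq_zero_of_inter_of_compl_inter {Ω : Type*} {m : MeasurableSpace Ω}
    (μ : Measure Ω) {A B : Set Ω} (h : μ (B ∩ A) = 0) (hc : μ (Bᶜ ∩ A) = 0) : μ A = 0 :=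
  measure_eq_zero_of_inter_of_inter_compl μ (B := B) (by rwa [Set.inter_comm])
    (by rwa [Set.inter_comm])

section EquivalentOnSingularOnCompl

-- `m` comes last so that the measures live on `m`, not on the sub-σ-field `m₀`.
variable {Ω : Type*} {m₀ m : MeasurableSpace Ω} {μ ν : Measure Ω} {L D : Set Ω}

lemma absolutelyContinuous_on_iff_null_compl
    (hequiv : ∀ A, MeasurableSet[m₀] A → (ν (A ∩ L) = 0 ↔ μ (A ∩ L) = 0))
    (hL : MeasurableSet[m₀] Lᶜ) (hD : MeasurableSet[m₀] D)
    (hμD : μ (D ∩ Lᶜ) = 0) (hνD : ν (Dᶜ ∩ Lᶜ) = 0) :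
    (∀ A, MeasurableSet[m₀] A → μ A = 0 → ν A = 0) ↔ ν Lᶜ = 0 := by
  constructor
  · intro hac
    exact measure_eq_zero_of_inter_of_compl_inter ν (hac _ (hD.inter hL) hμD) hνD
  · intro hνL A hA hμA
    have hνAL : ν (A ∩ L) = 0 := (hequiv A hA).2 (measure_mono_null Set.inter_subset_left hμA)
    exact measure_eq_zero_of_inter_of_inter_compl ν hνAL
      (measure_mono_null Set.inter_subset_right hνL)

lemma null_iff_null_of_equiv_on
    (hequiv : ∀ A, MeasurableSet[m₀] A → (ν (A ∩ L) = 0 ↔ μ (A ∩ L) = 0)) :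
    ν L = 0 ↔ μ L = 0 := by
  simpa using hequiv Set.univ MeasurableSet.univ

lemma mutuallySingular_on_iff_null
    (hequiv : ∀ A, MeasurableSet[m₀] A → (ν (A ∩ L) = 0 ↔ μ (A ∩ L) = 0))
    (hD : MeasurableSet[m₀] D) (hμD : μ (D ∩ Lᶜ) = 0) (hνD : ν (Dᶜ ∩ Lᶜ) = 0) :
    (∃ E, MeasurableSet[m₀] E ∧ μ E = 0 ∧ ν Eᶜ = 0) ↔ μ L = 0 ∧ ν L = 0 := by
  constructor
  · rintro ⟨E, hE, hμE, hνE⟩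
    have hνEL : ν (E ∩ L) = 0 := (hequiv E hE).2 (measure_mono_null Set.inter_subset_left hμE)
    have hνL : ν L = 0 := measure_eq_zero_of_inter_of_compl_inter ν hνEL
      (measure_mono_null Set.inter_subset_left hνE)
    exact ⟨(null_iff_null_of_equiv_on hequiv).1 hνL, hνL⟩
  · rintro ⟨hμL, hνL⟩
    refine ⟨D, hD, ?_, ?_⟩
    · exact measure_eq_zero_of_inter_of_inter_compl μ
        (measure_mono_null Set.inter_subset_right hμL) hμD
    · exact measure_eq_zero_of_inter_of_inter_compl ν
        (measure_mono_null Set.inter_subset_right hνL) hνD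

end EquivalentOnSingularOnCompl

lemma memSigmaAt_const_iff {Ω : Type*} {m : MeasurableSpace Ω} {𝓕 : Filtration ℝ≥0∞ m}
    {t : ℝ≥0∞} {A : Set Ω} : MemSigmaAt 𝓕 (fun _ => t) A ↔ MeasurableSet[𝓕 t] A := by
  refine ⟨fun h => by simpa using h t, fun hA s => ?_⟩
  rcases le_or_gt t s with hts | hst
  · simpa [hts] using 𝓕.mono hts _ hA
  · simp [not_le.2 hst]

namespace IsSeparatingTime

variable {Ω : Type*} {m : MeasurableSpace Ω} {𝓕 : Filtration ℝ≥0∞ m} {P Pt : Measure Ω}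
  {S : Ω → WithTop ℝ≥0∞}

lemma null_inter_lt_iff (hS : IsSeparatingTime 𝓕 P Pt S) (t : ℝ≥0∞) {A : Set Ω}
    (hA : MeasurableSet[𝓕 t] A) :
    Pt (A ∩ {ω | (t : WithTop ℝ≥0∞) < S ω}) = 0 ↔ P (A ∩ {ω | (t : WithTop ℝ≥0∞) < S ω}) = 0 :=
  (hS.2 _ (isStoppingTime_const 𝓕 t)).1 A (memSigmaAt_const_iff.2 hA)

lemma exists_singular_set (hS : IsSeparatingTime 𝓕 P Pt S) (t : ℝ≥0∞) :
    ∃ D : Set Ω, MeasurableSet[𝓕 t] D ∧ P (D ∩ {ω | (t : WithTop ℝ≥0∞) < S ω}ᶜ) = 0 ∧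
      Pt (Dᶜ ∩ {ω | (t : WithTop ℝ≥0∞) < S ω}ᶜ) = 0 := by
  obtain ⟨D, hD, hPD, hPtD⟩ := (hS.2 _ (isStoppingTime_const 𝓕 t)).2
  simp only [Set.compl_ofPred, not_lt]
  exact ⟨D, memSigmaAt_const_iff.1 hD, hPD, hPtD⟩

end IsSeparatingTime

theorem separating_time_fixed_time_general {Ω : Type*} {m : MeasurableSpace Ω}
    (𝓕 : Filtration ℝ≥0∞ m)
    (P Pt : Measure Ω)
    (S : Ω → WithTop ℝ≥0∞) (hS : IsSeparatingTime 𝓕 P Pt S) :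
    ∀ t : ℝ≥0∞,
      ((∀ A : Set Ω, MeasurableSet[𝓕 t] A → P A = 0 → Pt A = 0) ↔
        Pt {ω | S ω ≤ (t : WithTop ℝ≥0∞)} = 0) ∧
      (((∃ D : Set Ω, MeasurableSet[𝓕 t] D ∧ P D = 0 ∧ Pt Dᶜ = 0) ↔
          (P {ω | (t : WithTop ℝ≥0∞) < S ω} = 0 ∧ Pt {ω | (t : WithTop ℝ≥0∞) < S ω} = 0)) ∧
        ((P {ω | (t : WithTop ℝ≥0∞) < S ω} = 0 ∧ Pt {ω | (t : WithTop ℝ≥0∞) < S ω} = 0) ↔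
          P {ω | (t : WithTop ℝ≥0∞) < S ω} = 0)) := by
  intro t
  have hequiv := fun A => hS.null_inter_lt_iff t (A := A)
  obtain ⟨D, hD, hPD, hPtD⟩ := hS.exists_singular_set t
  have hle : {ω | S ω ≤ (t : WithTop ℝ≥0∞)} = {ω | (t : WithTop ℝ≥0∞) < S ω}ᶜ := by
    simp only [Set.compl_ofPred, not_lt]
  refine ⟨?_, mutuallySingular_on_iff_null hequiv hD hPD hPtD,
    ⟨And.left, fun hP => ⟨hP, (null_iff_null_of_equiv_on hequiv).2 hP⟩⟩⟩
  rw [hle]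
  exact absolutelyContinuous_on_iff_null_compl hequiv (hle ▸ hS.1 t) hD hPD hPtD

/-- **Separating time and absolute continuity / singularity at a fixed time**
(remark after the Lemma on separating times).
Let `S` be a separating time for `(Ω, F, (F_t), P, P̃)` (right-continuous filtration,
`F_∞ := F`, `P`, `P̃` probability measures).  Then for every `t ∈ [0,∞]` (i.e. `t : ℝ≥0∞`,
with `𝓕 ⊤ = F`):
(i) `P̃_t ≪ P_t` (on `F_t`) iff `S > t` holds `P̃`-a.s. (i.e. `{S ≤ t}` is `P̃`-null);
(ii) `P̃_t ⊥ P_t` iff `S ≤ t` holds `P`-a.s. and `P̃`-a.s., which in turn holds iff `S ≤ t`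
holds `P`-a.s. -/
theorem separating_time_fixed_time {Ω : Type*} {m : MeasurableSpace Ω}
    (𝓕 : Filtration ℝ≥0∞ m) (htop : 𝓕 ⊤ = m)
    (hrc : ∀ t : ℝ≥0∞, t ≠ ⊤ → 𝓕 t = ⨅ s : {s : ℝ≥0∞ // t < s ∧ s ≠ ⊤}, 𝓕 s.1)
    (P Pt : Measure Ω) [IsProbabilityMeasure P] [IsProbabilityMeasure Pt]
    (S : Ω → WithTop ℝ≥0∞) (hS : IsSeparatingTime 𝓕 P Pt S) :
    ∀ t : ℝ≥0∞,
      ((∀ A : Set Ω, MeasurableSet[𝓕 t] A → P A = 0 → Pt A = 0) ↔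
        Pt {ω | S ω ≤ (t : WithTop ℝ≥0∞)} = 0) ∧
      (((∃ D : Set Ω, MeasurableSet[𝓕 t] D ∧ P D = 0 ∧ Pt Dᶜ = 0) ↔
          (P {ω | (t : WithTop ℝ≥0∞) < S ω} = 0 ∧ Pt {ω | (t : WithTop ℝ≥0∞) < S ω} = 0)) ∧
        ((P {ω | (t : WithTop ℝ≥0∞) < S ω} = 0 ∧ Pt {ω | (t : WithTop ℝ≥0∞) < S ω} = 0) ↔
          P {ω | (t : WithTop ℝ≥0∞) < S ω} = 0)) :=
  separating_time_fixed_time_general 𝓕 P Pt S hS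
end

section
/- On the canonical space of possibly exiting continuous paths, for every n ∈ ℕ one has ⋁_{t∈[0,∞)} F_{t∧τ_n} = F_{τ_n}. -/
open MeasureTheory Set Filter
open scoped ENNReal NNReal

noncomputable section

/-- A path in the canonical space `Ω = C̄([0,∞), J)`: a continuous function
`ω : [0,∞) → [l,r]` (valued in `EReal`) starting inside `J = (l,r)` such that there is
`ζ(ω) ∈ (0,∞]` with `ω(t) ∈ J` for `t < ζ(ω)`, and in case `ζ(ω) < ∞` the path is absorbed
at `r` or at `l` from time `ζ(ω)` onwards. -/
def GoodPath (l r : EReal) (ω : ℝ≥0 → EReal) : Prop :=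
  Continuous ω ∧ (∀ t : ℝ≥0, l ≤ ω t ∧ ω t ≤ r) ∧ (l < ω 0 ∧ ω 0 < r) ∧
    ∃ ζ : ℝ≥0∞, 0 < ζ ∧
      (∀ t : ℝ≥0, (t : ℝ≥0∞) < ζ → l < ω t ∧ ω t < r) ∧
      ((∀ t : ℝ≥0, ζ ≤ (t : ℝ≥0∞) → ω t = r) ∨ (∀ t : ℝ≥0, ζ ≤ (t : ℝ≥0∞) → ω t = l))

/-- The canonical space `Ω` of continuous `[l,r]`-valued paths that start in `J = (l,r)` and
stay at an endpoint of `J` after exiting. -/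
abbrev Canon (l r : EReal) := {ω : ℝ≥0 → EReal // GoodPath l r ω}

/-- The natural σ-field `σ(X_s : s ∈ [0,u])` generated by the coordinate process up to
time `u`. -/
def natSigma (l r : EReal) (u : ℝ≥0) : MeasurableSpace (Canon l r) :=
  ⨆ s : {s : ℝ≥0 // s ≤ u}, MeasurableSpace.comap (fun ω => ω.1 s.1)
    (inferInstance : MeasurableSpace EReal)

/-- The right-continuous canonical filtration
`F_t = ⋂_{ε > 0} σ(X_s : s ∈ [0, t+ε])`. -/
def canonFiltration (l r : EReal) (t : ℝ≥0) : MeasurableSpace (Canon l r) :=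
  ⨅ ε : {ε : ℝ≥0 // 0 < ε}, natSigma l r (t + ε.1)

/-- The σ-field `F = ⋁_{t ∈ [0,∞)} F_t`. -/
def canonSigma (l r : EReal) : MeasurableSpace (Canon l r) :=
  ⨆ t : ℝ≥0, canonFiltration l r t

/-- `F_t` for `t ∈ [0,∞]`, with `F_∞ := F`. -/
def canonFiltrationE (l r : EReal) (t : ℝ≥0∞) : MeasurableSpace (Canon l r) :=
  WithTop.recTopCoe (canonSigma l r) (fun s => canonFiltration l r s) t

/-- The hitting time `τ = inf{t ∈ [0,∞) : X_t ∉ (a, c)}` (with `inf ∅ := ∞`). -/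
def exitTimeOf (l r : EReal) (a c : EReal) (ω : Canon l r) : ℝ≥0∞ :=
  sInf ((fun s : ℝ≥0 => (s : ℝ≥0∞)) '' {s : ℝ≥0 | ω.1 s ∉ Ioo a c})

/-- The family of sets `F_τ = {A ∈ F : A ∩ {τ ≤ s} ∈ F_s for all s ∈ [0,∞)}` associated with
a `[0,∞]`-valued random time `τ` on the canonical space.  (For a stopping time `τ` this family
is a σ-field.) -/
def stoppedFamily (l r : EReal) (τ : Canon l r → ℝ≥0∞) : Set (Set (Canon l r)) :=
  {A | MeasurableSet[canonSigma l r] A ∧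
       ∀ s : ℝ≥0, MeasurableSet[canonFiltration l r s] (A ∩ {ω | τ ω ≤ (s : ℝ≥0∞)})}

end

/-!
Every `A ∈ F_τ` splits as `⋃ₖ (A ∩ {τ ≤ k}) ∪ (A ∩ {τ = ∞})`, and `A ∩ {τ ≤ k} ∈ F_{k∧τ}`.
For the last piece, `B ∩ {τ > u} ∈ F_{u∧τ}` whenever `B ∈ F_t` and `t ≤ u`, so
`B ∩ {τ = ∞} = ⋂ₖ B ∩ {τ > t + k}` lies in `⋁_t F_{t∧τ}`; comparing trace σ-algebras on
`{τ = ∞}` extends this from `⋃_t F_t` to `F`. The reverse inclusion `F_{t∧τ} ⊆ F_τ` only needs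
`τ` to be a stopping time, which the exit time is: by continuity and compactness, `{τ ≤ t}` is
decided by the infimum and supremum of the path over a countable dense subset of `[0, t]`.
-/

open MeasurableSpace

section StoppedSets

variable {Ω : Type*} {ℱ : ℝ≥0 → MeasurableSpace Ω} {σ τ : Ω → ℝ≥0∞}

/-- `stoppedFamily l r` is `stoppedSets (canonFiltration l r)` by unfolding `canonSigma`. -/
def stoppedSets (ℱ : ℝ≥0 → MeasurableSpace Ω) (τ : Ω → ℝ≥0∞) : Set (Set Ω) :=
  {A | MeasurableSet[⨆ t, ℱ t] A ∧ ∀ s : ℝ≥0, MeasurableSet[ℱ s] (A ∩ {ω | τ ω ≤ s})}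

theorem stoppedSets_subset_of_le (hτ : ∀ t : ℝ≥0, MeasurableSet[ℱ t] {ω | τ ω ≤ t})
    (hστ : ∀ ω, σ ω ≤ τ ω) : stoppedSets ℱ σ ⊆ stoppedSets ℱ τ := by
  refine fun A hA => ⟨hA.1, fun s => ?_⟩
  have : A ∩ {ω | τ ω ≤ s} = (A ∩ {ω | σ ω ≤ s}) ∩ {ω | τ ω ≤ s} := by
    ext ω
    simp only [mem_inter_iff, mem_ofPred_eq]
    exact ⟨fun h => ⟨⟨h.1, (hστ ω).trans h.2⟩, h.2⟩, fun h => ⟨h.1.1, h.2⟩⟩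
  rw [this]
  exact (hA.2 s).inter (hτ s)

theorem inter_le_mem_stoppedSets_min (hℱ : Monotone ℱ) {A : Set Ω} (hA : A ∈ stoppedSets ℱ τ)
    (t : ℝ≥0) : A ∩ {ω | τ ω ≤ t} ∈ stoppedSets ℱ (fun ω => min (t : ℝ≥0∞) (τ ω)) := by
  refine ⟨le_iSup ℱ t _ (hA.2 t), fun s => ?_⟩
  have : A ∩ {ω | τ ω ≤ t} ∩ {ω | min (t : ℝ≥0∞) (τ ω) ≤ s} = A ∩ {ω | τ ω ≤ ↑(min t s)} := by
    ext ω
    simp only [mem_inter_iff, mem_ofPred_eq, ENNReal.coe_min, le_min_iff, min_le_iff]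
    constructor
    · rintro ⟨⟨hAω, hτt⟩, hts | hτs⟩
      exacts [⟨hAω, hτt, hτt.trans hts⟩, ⟨hAω, hτt, hτs⟩]
    · rintro ⟨hAω, hτt, hτs⟩
      exact ⟨⟨hAω, hτt⟩, Or.inr hτs⟩
  rw [this]
  exact hℱ (min_le_right t s) _ (hA.2 _)

theorem inter_not_le_mem_stoppedSets_min (hℱ : Monotone ℱ)
    (hτ : ∀ t : ℝ≥0, MeasurableSet[ℱ t] {ω | τ ω ≤ t}) {B : Set Ω} {t u : ℝ≥0} (htu : t ≤ u)
    (hB : MeasurableSet[ℱ t] B) :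
    B ∩ {ω | ¬τ ω ≤ u} ∈ stoppedSets ℱ (fun ω => min (u : ℝ≥0∞) (τ ω)) := by
  have hBu : MeasurableSet[ℱ u] (B ∩ {ω | ¬τ ω ≤ u}) := (hℱ htu _ hB).inter (hτ u).compl
  refine ⟨le_iSup ℱ u _ hBu, fun s => ?_⟩
  by_cases hus : u ≤ s
  · have : B ∩ {ω | ¬τ ω ≤ u} ⊆ {ω | min (u : ℝ≥0∞) (τ ω) ≤ s} :=
      fun ω _ => min_le_of_left_le (ENNReal.coe_le_coe.2 hus)
    rw [inter_eq_left.2 this]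
    exact hℱ hus _ hBu
  · have : B ∩ {ω | ¬τ ω ≤ u} ∩ {ω | min (u : ℝ≥0∞) (τ ω) ≤ s} = ∅ := by
      refine eq_empty_of_forall_notMem fun ω ⟨⟨_, hτu⟩, hmin⟩ => ?_
      rcases min_le_iff.1 (show min (u : ℝ≥0∞) (τ ω) ≤ s from hmin) with hus' | hτs
      · exact hus (ENNReal.coe_le_coe.1 hus')
      · exact hτu (hτs.trans (ENNReal.coe_le_coe.2 (not_le.1 hus).le))
    rw [this]
    exact @MeasurableSet.empty _ (ℱ s)

theorem measurableSet_inter_of_iSup {ι : Sort*} {m : MeasurableSpace Ω}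
    {ℱ : ι → MeasurableSpace Ω} {S A : Set Ω} (hS : MeasurableSet[m] S)
    (h : ∀ i B, MeasurableSet[ℱ i] B → MeasurableSet[m] (B ∩ S))
    (hA : MeasurableSet[⨆ i, ℱ i] A) : MeasurableSet[m] (A ∩ S) := by
  have hcomap : (⨆ i, ℱ i).comap ((↑) : S → Ω) ≤ m.comap (↑) := by
    rw [MeasurableSpace.comap_iSup]
    refine iSup_le fun i => ?_
    rintro _ ⟨B, hB, rfl⟩
    refine ⟨B ∩ S, h i B hB, ?_⟩
    ext x
    simp
  simpa [Subtype.image_preimage_coe, inter_comm] using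
    @MeasurableSet.subtype_image _ m S _ hS (hcomap _ ⟨A, hA, rfl⟩)

theorem ENNReal.eq_top_iff_forall_not_le_add_natCast (t : ℝ≥0) {x : ℝ≥0∞} :
    x = ⊤ ↔ ∀ k : ℕ, ¬x ≤ ↑(t + k) := by
  refine ⟨fun hx k => by simp [hx], fun h => by_contra fun hx => ?_⟩
  obtain ⟨k, hk⟩ := ENNReal.exists_nat_gt hx
  exact h k (hk.le.trans (by simp))

theorem iSup_generateFrom_stoppedSets_min (hℱ : Monotone ℱ)
    (hτ : ∀ t : ℝ≥0, MeasurableSet[ℱ t] {ω | τ ω ≤ t}) :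
    ⨆ t : ℝ≥0, generateFrom (stoppedSets ℱ fun ω => min (t : ℝ≥0∞) (τ ω)) =
      generateFrom (stoppedSets ℱ τ) := by
  set M := ⨆ t : ℝ≥0, generateFrom (stoppedSets ℱ fun ω => min (t : ℝ≥0∞) (τ ω))
  have hM : ∀ t : ℝ≥0, ∀ A ∈ stoppedSets ℱ (fun ω => min (t : ℝ≥0∞) (τ ω)),
      MeasurableSet[M] A := fun t A hA =>
    le_iSup (fun t : ℝ≥0 => generateFrom (stoppedSets ℱ fun ω => min (t : ℝ≥0∞) (τ ω))) t _
      (measurableSet_generateFrom hA)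
  have hTop : ∀ t B, MeasurableSet[ℱ t] B → MeasurableSet[M] (B ∩ {ω | τ ω = ⊤}) := by
    intro t B hB
    have : B ∩ {ω | τ ω = ⊤} = ⋂ k : ℕ, B ∩ {ω | ¬τ ω ≤ ↑(t + k)} := by
      ext ω
      simp [ENNReal.eq_top_iff_forall_not_le_add_natCast t, forall_and]
    rw [this]
    exact .iInter fun k => hM _ _ (inter_not_le_mem_stoppedSets_min hℱ hτ le_self_add hB)
  refine le_antisymm (iSup_le fun t => generateFrom_mono
    (stoppedSets_subset_of_le hτ fun ω => min_le_right _ _)) (generateFrom_le fun A hA => ?_)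
  have hA_eq : A = (⋃ k : ℕ, A ∩ {ω | τ ω ≤ (k : ℝ≥0)}) ∪ A ∩ {ω | τ ω = ⊤} := by
    ext ω
    by_cases hω : τ ω = ⊤
    · simp [hω]
    · obtain ⟨k, hk⟩ := ENNReal.exists_nat_gt hω
      simpa [hω] using fun _ => ⟨k, hk.le⟩
  rw [hA_eq]
  exact (MeasurableSet.iUnion fun k : ℕ => hM _ _ (inter_le_mem_stoppedSets_min hℱ hA k)).union
    (measurableSet_inter_of_iSup (by simpa using hTop 0 univ .univ) hTop hA.1)

end StoppedSets

theorem exists_le_iff_iInf_le_of_dense {X α : Type*} [TopologicalSpace X] [CompactSpace X]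
    [Nonempty X] [CompleteLinearOrder α] [TopologicalSpace α] [OrderTopology α] {f : X → α}
    (hf : Continuous f) {D : Set X} (hD : Dense D) {a : α} :
    (∃ x, f x ≤ a) ↔ ⨅ x : D, f x ≤ a := by
  rw [hD.ciInf' hf]
  obtain ⟨x₀, -, hx₀⟩ := isCompact_univ.exists_isMinOn univ_nonempty hf.continuousOn
  refine ⟨fun ⟨x, hx⟩ => (iInf_le f x).trans hx, fun h => ⟨x₀, ?_⟩⟩
  exact (le_iInf fun x => hx₀ (mem_univ x)).trans h

theorem exists_ge_iff_le_iSup_of_dense {X α : Type*} [TopologicalSpace X] [CompactSpace X]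
    [Nonempty X] [CompleteLinearOrder α] [TopologicalSpace α] [OrderTopology α] {f : X → α}
    (hf : Continuous f) {D : Set X} (hD : Dense D) {a : α} :
    (∃ x, a ≤ f x) ↔ a ≤ ⨆ x : D, f x :=
  exists_le_iff_iInf_le_of_dense (α := αᵒᵈ) hf hD

section Canon

variable {l r : EReal}

theorem natSigma_mono : Monotone (natSigma l r) := fun _ _ h =>
  iSup_le fun s => le_iSup_of_le ⟨s.1, s.2.trans h⟩ le_rfl

theorem canonFiltration_mono : Monotone (canonFiltration l r) := fun _ _ h =>
  le_iInf fun ε => iInf_le_of_le ε (natSigma_mono (add_le_add_left h _))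

theorem natSigma_le_canonFiltration (t : ℝ≥0) : natSigma l r t ≤ canonFiltration l r t :=
  le_iInf fun _ => natSigma_mono le_self_add

theorem measurable_natSigma_eval {s u : ℝ≥0} (h : s ≤ u) :
    Measurable[natSigma l r u] fun ω : Canon l r => ω.1 s :=
  measurable_iff_comap_le.2 (le_iSup_of_le ⟨s, h⟩ le_rfl)

theorem exitTimeOf_le_iff {a c : EReal} {ω : Canon l r} {t : ℝ≥0} :
    exitTimeOf l r a c ω ≤ t ↔ ∃ s : Icc 0 t, ω.1 s ∉ Ioo a c := by
  set S := {s : ℝ≥0 | ω.1 s ∉ Ioo a c}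
  constructor
  · intro h
    have hS : S.Nonempty := nonempty_iff_ne_empty.2 fun hS => by
      change sInf ((fun s : ℝ≥0 => (s : ℝ≥0∞)) '' S) ≤ _ at h
      simp [hS] at h
    have hclosed : IsClosed S := isOpen_Ioo.isClosed_compl.preimage ω.2.1
    refine ⟨⟨sInf S, zero_le, ?_⟩, hclosed.csInf_mem hS (OrderBot.bddBelow S)⟩
    rwa [exitTimeOf, sInf_image, ← ENNReal.coe_sInf hS, ENNReal.coe_le_coe] at h
  · rintro ⟨⟨s, hs⟩, hmem⟩
    exact (sInf_le (mem_image_of_mem (fun s : ℝ≥0 => (s : ℝ≥0∞)) hmem)).trans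
      (ENNReal.coe_le_coe.2 hs.2)

theorem measurableSet_exitTimeOf_le (a c : EReal) (t : ℝ≥0) :
    MeasurableSet[natSigma l r t] {ω : Canon l r | exitTimeOf l r a c ω ≤ t} := by
  obtain ⟨D, hDc, hD⟩ := TopologicalSpace.exists_countable_dense (Icc 0 t)
  have : Countable D := hDc.to_subtype
  have : Nonempty (Icc 0 t) := ⟨⟨t, right_mem_Icc.2 zero_le⟩⟩
  have hpath : ∀ ω : Canon l r, Continuous fun s : Icc 0 t => ω.1 s :=
    fun ω => ω.2.1.comp continuous_subtype_val
  have : {ω : Canon l r | exitTimeOf l r a c ω ≤ t} =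
      {ω | ⨅ s : D, ω.1 s ≤ a} ∪ {ω | c ≤ ⨆ s : D, ω.1 s} := by
    ext ω
    simp only [mem_ofPred_eq, mem_union, exitTimeOf_le_iff, mem_Ioo, not_and_or, not_lt,
      exists_or, exists_le_iff_iInf_le_of_dense (hpath ω) hD,
      exists_ge_iff_le_iSup_of_dense (hpath ω) hD]
  rw [this]
  have heval : ∀ s : D, Measurable[natSigma l r t] fun ω : Canon l r => ω.1 s :=
    fun s => measurable_natSigma_eval s.1.2.2
  exact (measurableSet_le (Measurable.iInf heval) measurable_const).union
    (measurableSet_le measurable_const (Measurable.iSup heval))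

end Canon

theorem iSup_stopped_sigma_eq_stopped_sigma_general
    (l r : EReal)
    (a c : ℕ → EReal)
    (n : ℕ) :
    (⨆ t : ℝ≥0, MeasurableSpace.generateFrom
        (stoppedFamily l r (fun ω => min (t : ℝ≥0∞) (exitTimeOf l r (a n) (c n) ω))))
      = MeasurableSpace.generateFrom (stoppedFamily l r (exitTimeOf l r (a n) (c n))) :=
  iSup_generateFrom_stoppedSets_min canonFiltration_mono fun t =>
    natSigma_le_canonFiltration t _ (measurableSet_exitTimeOf_le (a n) (c n) t)

/-- **Lemma: `⋁_{t ∈ [0,∞)} F_{t ∧ τ_n} = F_{τ_n}` for every `n ∈ ℕ`** on the canonical space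
of possibly exiting continuous paths.  Here `(a_n)` and `(c_n)` are strictly monotone sequences
in `J = (l, r)` with `a_n ↓ l`, `c_n ↑ r`, `a_n < c_n`, the stopping times are
`τ_n = inf{s : X_s ∉ (a_n, c_n)}` (`inf ∅ := ∞`) and, for a stopping time `τ`, `F_τ` is the
σ-field `{A ∈ F : A ∩ {τ ≤ s} ∈ F_s ∀ s ∈ [0,∞)}` (realised as the σ-field generated by this
family of sets, which is already a σ-field since `τ` is a stopping time). -/
theorem iSup_stopped_sigma_eq_stopped_sigma
    (l r : EReal) (hlr : l < r)
    (a c : ℕ → EReal)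
    (ha : StrictAnti a) (hc : StrictMono c)
    (haJ : ∀ n, l < a n) (hcJ : ∀ n, c n < r) (hac : ∀ n, a n < c n)
    (hal : Tendsto a atTop (nhds l)) (hcr : Tendsto c atTop (nhds r))
    (n : ℕ) :
    (⨆ t : ℝ≥0, MeasurableSpace.generateFrom
        (stoppedFamily l r (fun ω => min (t : ℝ≥0∞) (exitTimeOf l r (a n) (c n) ω))))
      = MeasurableSpace.generateFrom (stoppedFamily l r (exitTimeOf l r (a n) (c n))) :=
  iSup_stopped_sigma_eq_stopped_sigma_general l r a c n
end

section
/- For α > −1, the endpoint +∞ is good if and only if α > 3; that is, the two conditions 's(∞) := lim_{x→∞} s(x) < ∞' and 'the function x ↦ (s(∞) − s(x))·x²/ρ(x) satisfies ∫_z^∞ (s(∞) − s(x))·x²/ρ(x) dx < ∞ for some z ∈ ℝ' hold simultaneously if and only if α > 3. -/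
/-!
Write `φ y = 2 |y| ^ α`, so that `ρ = exp (-∫ φ)`. For large `x` the tail `s(∞) - s(x)` is
comparable to `x ^ (-α) ρ(x)`. Above: for `α ≥ 0`, `φ ≥ 2 x ^ α` on `[x, ∞)`, so
`ρ y ≤ ρ x e^{-2 x^α (y - x)}`, whose integral is at most `ρ x / (2 x ^ α)`. Below: on the window
`[x, x + x ^ (-α)]` we have `φ ≤ 2 · 2^|α| x ^ α`, so `∫ φ ≤ 2 · 2^|α|` there and `ρ` stays
above a fixed multiple of `ρ x` over a window of length `x ^ (-α)`. Hence the integrand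
`(s(∞) - s(x)) x² / ρ(x)` is comparable to `x ^ (2 - α)`, integrable at `∞` iff `α > 3`.
-/

open MeasureTheory Set Filter

open Real in
lemma integral_exp_neg_mul_sub_le {k : ℝ} (hk : 0 < k) (x u : ℝ) :
    ∫ y in x..u, exp (-(k * (y - x))) ≤ 1 / k := by
  rw [intervalIntegral.integral_comp_sub_right (fun y => exp (-(k * y))),
    show (fun y => exp (-(k * y))) = fun y => exp (-k * y) by simp,
    intervalIntegral.integral_comp_mul_left (fun y => exp y) (neg_ne_zero.2 hk.ne'), integral_exp,
    sub_self, mul_zero, exp_zero, smul_eq_mul, inv_neg, one_div]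
  nlinarith [exp_pos (-k * (u - x)), inv_pos.2 hk]

lemma intervalIntegrable_abs_rpow {α : ℝ} (hα : -1 < α) (a b : ℝ) :
    IntervalIntegrable (fun y : ℝ => |y| ^ α) volume a b := by
  have hpos : ∀ b : ℝ, 0 ≤ b → IntervalIntegrable (fun y : ℝ => |y| ^ α) volume 0 b := by
    intro b hb
    refine (intervalIntegral.intervalIntegrable_rpow' hα).congr fun y hy => ?_
    rw [uIoc_of_le hb] at hy
    simp only [abs_of_pos hy.1]
  have hzero (b : ℝ) : IntervalIntegrable (fun y : ℝ => |y| ^ α) volume 0 b := by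
    rcases le_total 0 b with hb | hb
    · exact hpos b hb
    · simpa using (IntervalIntegrable.iff_comp_neg).mp (hpos (-b) (neg_nonneg.2 hb))
  exact (hzero a).symm.trans (hzero b)

lemma rpow_le_two_rpow_abs_mul {α x t : ℝ} (hx : 0 < x) (ht : t ∈ Icc x (2 * x)) :
    t ^ α ≤ 2 ^ |α| * x ^ α := by
  have hq : 1 ≤ t / x := (one_le_div hx).2 ht.1
  calc t ^ α = (t / x) ^ α * x ^ α := by
        rw [← Real.mul_rpow (by positivity) hx.le, div_mul_cancel₀ _ hx.ne']
    _ ≤ 2 ^ |α| * x ^ α := by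
        gcongr
        calc (t / x) ^ α ≤ (t / x) ^ |α| := Real.rpow_le_rpow_of_exponent_le hq (le_abs_self α)
          _ ≤ 2 ^ |α| := by
            gcongr
            exact (div_le_iff₀ hx).2 ht.2

/-- The density `ρ(x) = exp (-∫_c^x φ)` of the scale function of a diffusion; for
`dY = μ(Y) dt + σ(Y) dW` one takes `φ = 2μ/σ²`. -/
noncomputable def scaleDensity (φ : ℝ → ℝ) (c x : ℝ) : ℝ :=
  Real.exp (-∫ y in c..x, φ y)

noncomputable def scaleFunction (φ : ℝ → ℝ) (c x : ℝ) : ℝ :=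
  ∫ y in c..x, scaleDensity φ c y

namespace scaleDensity

variable {φ : ℝ → ℝ} {c : ℝ}

lemma pos (x : ℝ) : 0 < scaleDensity φ c x := Real.exp_pos _

variable (hφ : ∀ a b, IntervalIntegrable φ volume a b)
include hφ

lemma continuous : Continuous (scaleDensity φ c) :=
  Real.continuous_exp.comp (intervalIntegral.continuous_primitive hφ c).neg

lemma eq_mul_exp (x u : ℝ) :
    scaleDensity φ c u = scaleDensity φ c x * Real.exp (-∫ y in x..u, φ y) := by
  rw [scaleDensity, scaleDensity, ← Real.exp_add,
    ← intervalIntegral.integral_add_adjacent_intervals (hφ c x) (hφ x u), neg_add]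

end scaleDensity

namespace scaleFunction

variable {φ : ℝ → ℝ} {c : ℝ} (hφ : ∀ a b, IntervalIntegrable φ volume a b)
include hφ

lemma sub_eq_integral (x u : ℝ) :
    scaleFunction φ c u - scaleFunction φ c x = ∫ y in x..u, scaleDensity φ c y :=
  intervalIntegral.integral_interval_sub_left ((scaleDensity.continuous hφ).intervalIntegrable _ _)
    ((scaleDensity.continuous hφ).intervalIntegrable _ _)

lemma continuous : Continuous (scaleFunction φ c) :=
  intervalIntegral.continuous_primitive
    (fun _ _ => (scaleDensity.continuous hφ).intervalIntegrable _ _) c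

lemma monotone : Monotone (scaleFunction φ c) := fun x u hxu => by
  have := intervalIntegral.integral_nonneg (μ := volume) hxu fun y _ =>
    (scaleDensity.pos (φ := φ) (c := c) y).le
  linarith [sub_eq_integral hφ (c := c) x u]

/-- Where `φ ≥ k > 0`, `ρ` decays at least like `e^{-k (y - x)}`. -/
lemma sub_le_of_forall_le {k x u : ℝ} (hk : 0 < k) (hxu : x ≤ u) (hkφ : ∀ y ∈ Icc x u, k ≤ φ y) :
    scaleFunction φ c u - scaleFunction φ c x ≤ scaleDensity φ c x / k := by
  have hρ_le : ∀ y ∈ Icc x u,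
      scaleDensity φ c y ≤ scaleDensity φ c x * Real.exp (-(k * (y - x))) := by
    intro y hy
    rw [scaleDensity.eq_mul_exp hφ x y]
    refine mul_le_mul_of_nonneg_left (Real.exp_le_exp.2 (neg_le_neg ?_)) (scaleDensity.pos x).le
    calc k * (y - x) = ∫ _ in x..y, k := by simp [mul_comm]
      _ ≤ ∫ t in x..y, φ t := intervalIntegral.integral_mono_on hy.1 intervalIntegrable_const
          (hφ x y) fun t ht => hkφ t ⟨ht.1, ht.2.trans hy.2⟩
  calc scaleFunction φ c u - scaleFunction φ c x
      ≤ ∫ y in x..u, scaleDensity φ c x * Real.exp (-(k * (y - x))) := by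
        rw [sub_eq_integral hφ]
        exact intervalIntegral.integral_mono_on hxu
          ((scaleDensity.continuous hφ).intervalIntegrable _ _)
          ((by fun_prop : Continuous _).intervalIntegrable _ _) hρ_le
    _ ≤ scaleDensity φ c x * (1 / k) := by
        rw [intervalIntegral.integral_const_mul]
        gcongr
        · exact (scaleDensity.pos x).le
        · exact integral_exp_neg_mul_sub_le hk x u
    _ = scaleDensity φ c x / k := by ring

lemma le_sub_of_forall_le {δ M x : ℝ} (hδ : 0 ≤ δ) (hM : 0 ≤ M)
    (hφM : ∀ y ∈ Icc x (x + δ), φ y ≤ M) :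
    δ * Real.exp (-(M * δ)) * scaleDensity φ c x ≤
      scaleFunction φ c (x + δ) - scaleFunction φ c x := by
  have hρ_ge : ∀ y ∈ Icc x (x + δ),
      scaleDensity φ c x * Real.exp (-(M * δ)) ≤ scaleDensity φ c y := by
    intro y hy
    rw [scaleDensity.eq_mul_exp hφ x y]
    refine mul_le_mul_of_nonneg_left (Real.exp_le_exp.2 (neg_le_neg ?_)) (scaleDensity.pos x).le
    calc ∫ t in x..y, φ t ≤ ∫ _ in x..y, M := intervalIntegral.integral_mono_on hy.1 (hφ x y)
          intervalIntegrable_const fun t ht => hφM t ⟨ht.1, ht.2.trans hy.2⟩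
      _ = M * (y - x) := by simp [mul_comm]
      _ ≤ M * δ := by gcongr; linarith [hy.2]
  calc δ * Real.exp (-(M * δ)) * scaleDensity φ c x
      = ∫ _ in x..x + δ, scaleDensity φ c x * Real.exp (-(M * δ)) := by simp; ring
    _ ≤ _ := by
        rw [sub_eq_integral hφ]
        exact intervalIntegral.integral_mono_on (by linarith) intervalIntegrable_const
          ((scaleDensity.continuous hφ).intervalIntegrable _ _) hρ_ge

lemma exists_tendsto_of_forall_le {k x : ℝ} (hk : 0 < k) (hkφ : ∀ y ∈ Ici x, k ≤ φ y) :
    ∃ L, Tendsto (scaleFunction φ c) atTop (nhds L) := by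
  have hbdd : BddAbove (range (scaleFunction φ c)) := by
    refine ⟨scaleFunction φ c x + scaleDensity φ c x / k, ?_⟩
    rintro _ ⟨u, rfl⟩
    rcases le_total u x with hux | hxu
    · linarith [monotone hφ (c := c) hux, div_pos (scaleDensity.pos (φ := φ) (c := c) x) hk]
    · linarith [sub_le_of_forall_le hφ (c := c) hk hxu fun y hy => hkφ y hy.1]
  exact ⟨_, tendsto_atTop_ciSup (monotone hφ) hbdd⟩

variable {L : ℝ} (hL : Tendsto (scaleFunction φ c) atTop (nhds L))
include hL

lemma limit_sub_le_of_forall_le {k x : ℝ} (hk : 0 < k) (hkφ : ∀ y ∈ Ici x, k ≤ φ y) :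
    L - scaleFunction φ c x ≤ scaleDensity φ c x / k :=
  le_of_tendsto (hL.sub_const _) <| eventually_atTop.2
    ⟨x, fun _ hxu => sub_le_of_forall_le hφ hk hxu fun y hy => hkφ y hy.1⟩

lemma le_limit_sub_of_forall_le {δ M x : ℝ} (hδ : 0 ≤ δ) (hM : 0 ≤ M)
    (hφM : ∀ y ∈ Icc x (x + δ), φ y ≤ M) :
    δ * Real.exp (-(M * δ)) * scaleDensity φ c x ≤ L - scaleFunction φ c x := by
  linarith [le_sub_of_forall_le hφ (c := c) hδ hM hφM, (monotone hφ).ge_of_tendsto hL (x + δ)]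

end scaleFunction

section PowerDrift

variable {α c L : ℝ}

lemma norm_powerDrift_tail_mul_sq_div_le (hα : 0 ≤ α)
    (hL : Tendsto (scaleFunction (fun y => 2 * |y| ^ α) c) atTop (nhds L)) {x : ℝ} (hx : 1 ≤ x) :
    ‖(L - scaleFunction (fun y => 2 * |y| ^ α) c x) * x ^ 2 /
        scaleDensity (fun y => 2 * |y| ^ α) c x‖ ≤ x ^ (2 - α) / 2 := by
  have hφ a b := (intervalIntegrable_abs_rpow (α := α) (by linarith) a b).const_mul 2
  have hx0 : 0 < x := by linarith
  have hρ := scaleDensity.pos (φ := fun y => 2 * |y| ^ α) (c := c) x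
  have htail := scaleFunction.limit_sub_le_of_forall_le hφ hL (by positivity : 0 < 2 * x ^ α)
    fun y hy => by
      have hy : x ≤ y := hy
      rw [abs_of_pos (hx0.trans_le hy)]
      gcongr
  have htail0 : 0 ≤ L - scaleFunction (fun y => 2 * |y| ^ α) c x :=
    sub_nonneg.2 ((scaleFunction.monotone hφ).ge_of_tendsto hL x)
  rw [Real.norm_of_nonneg (by positivity), Real.rpow_sub hx0, Real.rpow_two]
  calc (L - scaleFunction (fun y => 2 * |y| ^ α) c x) * x ^ 2 /
        scaleDensity (fun y => 2 * |y| ^ α) c x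
      ≤ scaleDensity (fun y => 2 * |y| ^ α) c x / (2 * x ^ α) * x ^ 2 /
        scaleDensity (fun y => 2 * |y| ^ α) c x := by gcongr
    _ = x ^ 2 / x ^ α / 2 := by field_simp

lemma rpow_le_exp_mul_powerDrift_tail_mul_sq_div (hα : -1 < α)
    (hL : Tendsto (scaleFunction (fun y => 2 * |y| ^ α) c) atTop (nhds L)) {x : ℝ} (hx : 1 ≤ x) :
    x ^ (2 - α) ≤ Real.exp (2 * 2 ^ |α|) * ((L - scaleFunction (fun y => 2 * |y| ^ α) c x) *
      x ^ 2 / scaleDensity (fun y => 2 * |y| ^ α) c x) := by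
  have hφ a b := (intervalIntegrable_abs_rpow hα a b).const_mul 2
  have hx0 : 0 < x := by linarith
  have hρ := scaleDensity.pos (φ := fun y => 2 * |y| ^ α) (c := c) x
  have hδx : x ^ (-α) ≤ x := by
    simpa using Real.rpow_le_rpow_of_exponent_le hx (by linarith : -α ≤ 1)
  have hMδ : 2 * (2 ^ |α| * x ^ α) * x ^ (-α) = 2 * 2 ^ |α| := by
    rw [mul_assoc, mul_assoc, ← Real.rpow_add hx0, add_neg_cancel, Real.rpow_zero, mul_one]
  have htail := scaleFunction.le_limit_sub_of_forall_le hφ hL (by positivity : 0 ≤ x ^ (-α))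
    (by positivity : 0 ≤ 2 * (2 ^ |α| * x ^ α)) fun y hy => by
      rw [abs_of_pos (hx0.trans_le hy.1)]
      gcongr
      exact rpow_le_two_rpow_abs_mul hx0 ⟨hy.1, by linarith [hy.2]⟩
  rw [hMδ] at htail
  calc x ^ (2 - α)
      = Real.exp (2 * 2 ^ |α|) * (x ^ (-α) * Real.exp (-(2 * 2 ^ |α|)) *
          scaleDensity (fun y => 2 * |y| ^ α) c x * x ^ 2 /
            scaleDensity (fun y => 2 * |y| ^ α) c x) := by
        rw [sub_eq_neg_add, Real.rpow_add hx0, Real.rpow_two, Real.exp_neg]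
        field_simp
    _ ≤ _ := by gcongr

end PowerDrift

/-- **Example (SDE `dY = |Y|^α dt + dW`, `b(x) = x`): the endpoint `+∞` is good iff
`α > 3`.**  For `α > -1` and `c ∈ ℝ`, with `ρ(x) = exp(-∫_c^x 2|y|^α dy)` and
`s(x) = ∫_c^x ρ(y) dy`, the two conditions `s(∞) = lim_{x → ∞} s(x) < ∞` (i.e. `s` converges
to a finite limit `L` at `+∞`) and `∫_z^∞ (s(∞) - s(x))·x²/ρ(x) dx < ∞` for some `z ∈ ℝ`
hold simultaneously if and only if `α > 3`. -/
theorem example_power_drift_top_good_iff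
    (α : ℝ) (hα : -1 < α) (c : ℝ)
    (ρ s : ℝ → ℝ)
    (hρ : ∀ x : ℝ, ρ x = Real.exp (-(∫ y in c..x, 2 * |y| ^ α)))
    (hs : ∀ x : ℝ, s x = ∫ y in c..x, ρ y) :
    (∃ L : ℝ, Tendsto s atTop (nhds L) ∧
        ∃ z : ℝ, IntegrableOn (fun x => (L - s x) * x ^ 2 / ρ x) (Ioi z) volume) ↔
      3 < α := by
  have hφ a b := (intervalIntegrable_abs_rpow hα a b).const_mul 2
  obtain rfl : ρ = scaleDensity (fun y => 2 * |y| ^ α) c := funext hρ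
  obtain rfl : s = scaleFunction (fun y => 2 * |y| ^ α) c := funext hs
  constructor
  · rintro ⟨L, hL, z, hint⟩
    have hw : 0 < max z 1 := by positivity
    have hpow : IntegrableOn (fun x => x ^ (2 - α)) (Ioi (max z 1)) :=
      ((hint.mono_set (Ioi_subset_Ioi (le_max_left z 1))).const_mul _).mono'
        (measurable_id.pow_const _).aestronglyMeasurable <| by
          filter_upwards [ae_restrict_mem measurableSet_Ioi] with x hx
          have hx1 : 1 ≤ x := (le_max_right z 1).trans hx.le
          rw [Real.norm_of_nonneg (by positivity)]
          exact rpow_le_exp_mul_powerDrift_tail_mul_sq_div hα hL hx1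
    linarith [(integrableOn_Ioi_rpow_iff hw).1 hpow]
  · intro h3α
    obtain ⟨L, hL⟩ := scaleFunction.exists_tendsto_of_forall_le hφ (x := 1) (c := c) two_pos
      fun y hy => by
        have hy : 1 ≤ y := hy
        rw [abs_of_pos (by linarith)]
        nlinarith [Real.one_le_rpow hy (by linarith : 0 ≤ α)]
    refine ⟨L, hL, 1,
      ((integrableOn_Ioi_rpow_of_lt (a := 2 - α) (by linarith) one_pos).div_const 2).mono' ?_ ?_⟩
    · refine Continuous.aestronglyMeasurable (Continuous.div ?_ (scaleDensity.continuous hφ)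
        fun x => (scaleDensity.pos x).ne')
      exact (continuous_const.sub (scaleFunction.continuous hφ)).mul (continuous_pow 2)
    · filter_upwards [ae_restrict_mem measurableSet_Ioi] with x hx
      exact norm_powerDrift_tail_mul_sq_div_le (by linarith) hL hx.le
end
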